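/- Let B be a complex Banach space. A function f : ℂ → B is entire (complex differentiable at every point of ℂ) if and only if there exists a sequence (a_k)_{k∈ℕ} of elements of B which is exponentially decreasing and such that for every z ∈ ℂ the series ∑_{k=0}^∞ z^k • a_k converges to f(z). -/
import Mathlib

lemma stmt0_decay {B : Type*} [NormedAddCommGroup B] [NormedSpace ℂ B]
    (a : ℕ → B) (h : ∀ z : ℂ, Summable fun k : ℕ => z ^ k • a k) (n : ℕ) :
    Summable fun k : ℕ => ‖a k‖ * Real.exp ((n : ℝ) * k) := by
  have hz := (h (Real.exp (n + 1) : ℝ)).tendsto_atTop_zero.norm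
  have hb : ∃ C, ∀ k, ‖a k‖ * Real.exp (((n : ℝ) + 1) * k) ≤ C := by
    obtain ⟨C, hC⟩ := Filter.Tendsto.bddAbove_range hz
    refine ⟨C, fun k => ?_⟩
    have := hC ⟨k, rfl⟩
    simp only [norm_smul, norm_pow, Complex.norm_real, Real.norm_eq_abs,
      abs_of_pos (Real.exp_pos _)] at this
    calc ‖a k‖ * Real.exp (((n : ℝ) + 1) * k)
        = Real.exp (n + 1) ^ k * ‖a k‖ := by
          rw [← Real.exp_nat_mul, mul_comm ((n:ℝ)+1), mul_comm]
      _ ≤ C := this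
  obtain ⟨C, hC⟩ := hb
  refine Summable.of_nonneg_of_le (fun k => by positivity)
    (fun k => ?_) ((summable_geometric_of_lt_one (by positivity)
      (Real.exp_lt_one_iff.mpr (by norm_num) : Real.exp (-1) < 1)).mul_left C)
  have h1 : Real.exp ((n : ℝ) * k) = Real.exp (((n:ℝ)+1) * k) * Real.exp (-1) ^ k := by
    rw [← Real.exp_nat_mul, ← Real.exp_add]; ring_nf
  rw [h1, ← mul_assoc]
  gcongr
  exact hC k

/-- For a complex Banach space `B`, a function `f : ℂ → B` is entire
(complex differentiable at every point) iff there is an exponentially decreasing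
sequence `(a k)` in `B` such that `∑ k, z ^ k • a k` converges to `f z` for all `z`. -/
theorem stmt_0 (B : Type*) [NormedAddCommGroup B] [NormedSpace ℂ B] [CompleteSpace B]
    (f : ℂ → B) :
    (∀ z : ℂ, DifferentiableAt ℂ f z) ↔
      ∃ a : ℕ → B,
        (∀ n : ℕ, Summable fun k : ℕ => ‖a k‖ * Real.exp ((n : ℝ) * k)) ∧
        (∀ z : ℂ, HasSum (fun k : ℕ => z ^ k • a k) (f z)) := by
  constructor
  · intro hf
    refine ⟨fun k => ((k.factorial : ℂ))⁻¹ • iteratedDeriv k f 0, ?_, ?_⟩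
    case refine_2 =>
      intro z
      have := Complex.hasSum_taylorSeries_of_entire (fun z => hf z) 0 z
      have heq : (fun k : ℕ => z ^ k • ((k.factorial : ℂ))⁻¹ • iteratedDeriv k f 0)
          = fun k : ℕ => ((k.factorial : ℂ))⁻¹ • (z - 0) ^ k • iteratedDeriv k f 0 := by
        funext k
        rw [sub_zero, smul_comm]
      rw [heq]
      exact this
    case refine_1 =>
      intro n
      apply stmt0_decay
      intro z
      have := Complex.hasSum_taylorSeries_of_entire (fun z => hf z) 0 z
      have heq : (fun k : ℕ => z ^ k • ((k.factorial : ℂ))⁻¹ • iteratedDeriv k f 0)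
          = fun k : ℕ => ((k.factorial : ℂ))⁻¹ • (z - 0) ^ k • iteratedDeriv k f 0 := by
        funext k
        rw [sub_zero, smul_comm]
      rw [heq]
      exact this.summable
  · rintro ⟨a, hdec, ha⟩ z
    set p : FormalMultilinearSeries ℂ ℂ B :=
      fun k => ContinuousMultilinearMap.mkPiRing ℂ (Fin k) (a k)
    have hrad : p.radius = ⊤ := by
      rw [eq_top_iff]
      refine ENNReal.le_of_forall_nnreal_lt fun r _ => ?_
      apply p.le_radius_of_summable
      have hnp : ∀ k, ‖p k‖ = ‖a k‖ := fun k => ContinuousMultilinearMap.norm_mkPiRing _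
      have hle : (r : ℝ) ≤ Real.exp (⌈(r : ℝ)⌉₊ : ℝ) :=
        (Nat.le_ceil _).trans ((Real.add_one_le_exp _).trans' (by linarith))
      refine Summable.of_nonneg_of_le (fun k => by positivity) (fun k => ?_) (hdec ⌈(r : ℝ)⌉₊)
      calc ‖p k‖ * (r:ℝ)^k = ‖a k‖ * (r:ℝ)^k := by rw [hnp]
        _ ≤ ‖a k‖ * Real.exp ((⌈(r:ℝ)⌉₊:ℝ)) ^ k := by gcongr
        _ = ‖a k‖ * Real.exp ((⌈(r:ℝ)⌉₊:ℝ) * k) := by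
            rw [← Real.exp_nat_mul, mul_comm (k:ℝ)]
    have hball : HasFPowerSeriesOnBall f p 0 ⊤ := by
      refine ⟨hrad.ge, by simp, fun {y} _ => ?_⟩
      have heq : (fun n => p n fun _ => y) = fun n => y ^ n • a n := by
        funext n
        simp [p, ContinuousMultilinearMap.mkPiRing_apply]
      rw [heq, zero_add]
      exact ha y
    exact hball.differentiableOn.differentiableAt
      (EMetric.isOpen_ball.mem_nhds (EMetric.mem_ball.mpr (edist_lt_top _ _)))
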